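/- arXiv:2503.22068 — 2 statements merged into one kernel-verified Lean document; each statement's English description precedes it below -/
import Mathlib

section
/- Network refinement with rerelation preserves satisfaction by any earlier refiner (continual-learning guarantee for MNR, edge case): let G₀ = (V₀, E₀) be satisfied by H = (V₁, E₁) under f : V₀ → V₁, and let E₀ a b hold. Then the graph obtained from G₀ by removing the edge (a, b) with rerelation (edge relation E₀' u v := (E₀ u v ∧ ¬(u = a ∧ v = b)) ∨ (E₀ u a ∧ E₀ b v)) is still satisfied by H under f: for every u, v with E₀' u v, there is a directed path from f u to f v in H. -/
/-- Network refinement with rerelation (edge case) preserves satisfaction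
by any earlier refiner: if `G₀ = (V₀, E₀)` is satisfied by `H = (V₁, E₁)` under `f`
(every edge of `G₀` maps to a directed path in `H`), and `E₀ a b` holds, then the graph
obtained by removing the edge `(a, b)` with rerelation is still satisfied by `H` under
`f`. -/
theorem removeEdgeWithRerelation_preserves_satisfaction
    {V₀ V₁ : Type*} (E₀ : V₀ → V₀ → Prop) (E₁ : V₁ → V₁ → Prop) (f : V₀ → V₁)
    (hsat : ∀ u v, E₀ u v → Relation.ReflTransGen E₁ (f u) (f v))
    (a b : V₀) (hab : E₀ a b)
    (E₀' : V₀ → V₀ → Prop)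
    (hE₀' : ∀ u v, E₀' u v ↔ ((E₀ u v ∧ ¬(u = a ∧ v = b)) ∨ (E₀ u a ∧ E₀ b v))) :
    ∀ u v, E₀' u v → Relation.ReflTransGen E₁ (f u) (f v) := by
  intro u v h
  rcases (hE₀' u v).1 h with ⟨h1, _⟩ | ⟨h1, h2⟩
  · exact hsat u v h1
  · exact ((hsat u a h1).trans (hsat a b hab)).trans (hsat b v h2)
end

section
/- Network refinement with rerelation preserves satisfaction by any earlier refiner (node-removal case): let G = (V₀, E₀) be satisfied by H = (V₁, E₁) under f : V₀ → V₁, let n ∈ V₀, and let G' be the graph on the nodes V₀ \ {n} with edge relation E' u v := (u ≠ n ∧ v ≠ n) ∧ (E₀ u v ∨ (E₀ u n ∧ E₀ n v)), i.e. n is removed and each path p → n → s through n is replaced by a shortcut edge (p, s). Then G' is satisfied by H under (the restriction of) f: for every u, v with E' u v there is a directed path from f u to f v in H. -/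
/-- Network refinement with rerelation (node-removal case) preserves
satisfaction by any earlier refiner: if `G = (V₀, E₀)` is satisfied by `H = (V₁, E₁)`
under `f`, and node `n` is removed with rerelation (each path `p → n → s` replaced by a
shortcut edge `(p, s)`), then the resulting graph is still satisfied by `H` under `f`. -/
theorem removeNodeWithRerelation_preserves_satisfaction
    {V₀ V₁ : Type*} (E₀ : V₀ → V₀ → Prop) (E₁ : V₁ → V₁ → Prop) (f : V₀ → V₁)
    (hsat : ∀ u v, E₀ u v → Relation.ReflTransGen E₁ (f u) (f v))
    (n : V₀)
    (E' : V₀ → V₀ → Prop)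
    (hE' : ∀ u v, E' u v ↔ ((u ≠ n ∧ v ≠ n) ∧ (E₀ u v ∨ (E₀ u n ∧ E₀ n v)))) :
    ∀ u v, E' u v → Relation.ReflTransGen E₁ (f u) (f v) := by
  intro u v h
  rcases (hE' u v).mp h with ⟨_, h | ⟨h1, h2⟩⟩
  · exact hsat u v h
  · exact (hsat u n h1).trans (hsat n v h2)
end
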